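/- arXiv:2509.02849 — 4 statements merged into one kernel-verified Lean document; each statement's English description precedes it below -/
import Mathlib

section
/- Let A₁, ..., A_p be n×n real symmetric positive semidefinite matrices and let A = ∑ₖ Aₖ. Let B₁, ..., B_p be n×m real matrices, B = ∑ₖ Bₖ, and Γ an m×m symmetric positive semidefinite matrix. If the block matrix G = [[A, B], [Bᵀ, Γ]] is positive semidefinite, then setting X = A† B, the matrices Cₖ = (1/p)(Γ - Xᵀ B) + Xᵀ Aₖ X satisfy ∑ₖ Cₖ = Γ and each block matrix [[Aₖ, Aₖ X], [Xᵀ Aₖᵀ, Cₖ]] is positive semidefinite. -/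
/-!
Since `G ⪰ 0`, every vector in the kernel of `A = ∑ Aₖ` is isotropic for `G`, hence lies in the
kernel of `G` and in particular in that of `Bᵀ`. As `A A†` is the orthogonal projection onto
`range A = (ker A)ᗮ`, this gives `A X = A A† B = B`, so `Xᵀ B = Xᵀ A X`, and the congruence of `G`
by `[-X; 1]` shows that the Schur complement `Γ - Xᵀ A X` is positive semidefinite. Each arrow
block is then the congruence of `Aₖ` by `[1, X]` plus a `1/p` share of the Schur complement in the
lower corner, and the shares add up to `Γ` because `∑ Xᵀ Aₖ X = Xᵀ A X`.
-/

open Matrix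

/-- The four Penrose conditions characterizing the Moore–Penrose pseudoinverse. -/
def IsMoorePenrose {n m : Type*} [Fintype n] [Fintype m]
    (A : Matrix n m ℝ) (Ad : Matrix m n ℝ) : Prop :=
  A * Ad * A = A ∧ Ad * A * Ad = Ad ∧ (A * Ad)ᵀ = A * Ad ∧ (Ad * A)ᵀ = Ad * A

open scoped ComplexOrder

namespace Matrix.PosSemidef

variable {𝕜 : Type*} [RCLike 𝕜] {n m : Type*} [Fintype n] [Fintype m]

theorem conjTranspose_mulVec_eq_zero_of_fromBlocks {A : Matrix n n 𝕜} {B : Matrix n m 𝕜}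
    {D : Matrix m m 𝕜} (hG : (fromBlocks A B Bᴴ D).PosSemidef) {v : n → 𝕜}
    (hv : A *ᵥ v = 0) : Bᴴ *ᵥ v = 0 := by
  have hker : fromBlocks A B Bᴴ D *ᵥ Sum.elim v 0 = 0 := by
    refine (hG.dotProduct_mulVec_zero_iff _).mp ?_
    simp [fromBlocks_mulVec, hv, Function.star_sumElim]
  simpa [fromBlocks_mulVec] using congrArg (· ∘ Sum.inr) hker

theorem sub_conjTranspose_mul_mul_of_fromBlocks [DecidableEq m] {A : Matrix n n 𝕜}
    {B : Matrix n m 𝕜} {D : Matrix m m 𝕜} (hG : (fromBlocks A B Bᴴ D).PosSemidef)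
    {X : Matrix n m 𝕜} (hX : A * X = B) : (D - Xᴴ * A * X).PosSemidef := by
  have hA : Aᴴ = A := (isHermitian_fromBlocks_iff.mp hG.1).1
  have hcongr : (fromRows (-X) (1 : Matrix m m 𝕜))ᴴ * fromBlocks A B Bᴴ D *
      fromRows (-X) (1 : Matrix m m 𝕜) = D - Xᴴ * A * X := by
    rw [Matrix.mul_assoc, fromBlocks_mul_fromRows,
      conjTranspose_fromRows_eq_fromCols_conjTranspose, fromCols_mul_fromRows, ← hX,
      conjTranspose_mul, hA]
    simp [Matrix.mul_assoc, sub_eq_neg_add]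
  exact hcongr ▸ hG.conjTranspose_mul_mul_same _

theorem fromBlocks_mul_add [DecidableEq n] [DecidableEq m] {M : Matrix n n 𝕜}
    (hM : M.PosSemidef) (X : Matrix n m 𝕜) {D : Matrix m m 𝕜} (hD : D.PosSemidef) :
    (fromBlocks M (M * X) (Xᴴ * Mᴴ) (Xᴴ * M * X + D)).PosSemidef := by
  have hM' : (fromCols (1 : Matrix n n 𝕜) X)ᴴ * M * fromCols (1 : Matrix n n 𝕜) X =
      fromBlocks M (M * X) (Xᴴ * Mᴴ) (Xᴴ * M * X) := by
    rw [conjTranspose_fromCols_eq_fromRows_conjTranspose, fromRows_mul, fromRows_mul_fromCols,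
      hM.1.eq]
    simp
  have hD' : (fromCols (0 : Matrix m n 𝕜) (1 : Matrix m m 𝕜))ᴴ * D *
      fromCols (0 : Matrix m n 𝕜) (1 : Matrix m m 𝕜) = fromBlocks 0 0 0 D := by
    rw [conjTranspose_fromCols_eq_fromRows_conjTranspose, fromRows_mul, fromRows_mul_fromCols]
    simp
  have hsum := (hM.conjTranspose_mul_mul_same (fromCols (1 : Matrix n n 𝕜) X)).add
    (hD.conjTranspose_mul_mul_same (fromCols (0 : Matrix m n 𝕜) (1 : Matrix m m 𝕜)))
  rwa [hM', hD', fromBlocks_add, add_zero, add_zero, add_zero] at hsum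

end Matrix.PosSemidef

theorem IsMoorePenrose.mul_mul_eq_of_fromBlocks_posSemidef {n m : Type*} [Fintype n]
    [Fintype m] [DecidableEq n] {A Ad : Matrix n n ℝ} {B : Matrix n m ℝ} {D : Matrix m m ℝ}
    (hAd : IsMoorePenrose A Ad) (hG : (fromBlocks A B Bᵀ D).PosSemidef) : A * Ad * B = B := by
  obtain ⟨hAAdA, -, hAAd, -⟩ := hAd
  rw [← conjTranspose_eq_transpose_of_trivial] at hG
  have hA : Aᵀ = A := (isHermitian_fromBlocks_iff.mp hG.1).1
  have hQA : (1 - A * Ad) * A = 0 := by rw [Matrix.sub_mul, Matrix.one_mul, hAAdA, sub_self]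
  have hAQ : A * (1 - A * Ad) = 0 := by
    simpa [hA, hAAd] using congrArg transpose hQA
  have hBQ : Bᵀ * (1 - A * Ad) = 0 := by
    refine mulVec_injective (funext fun w => ?_)
    rw [← mulVec_mulVec, zero_mulVec, ← conjTranspose_eq_transpose_of_trivial]
    exact hG.conjTranspose_mulVec_eq_zero_of_fromBlocks (by rw [mulVec_mulVec, hAQ, zero_mulVec])
  have hQB := congrArg transpose hBQ
  simp only [transpose_mul, transpose_sub, transpose_one, hAAd, transpose_transpose,
    transpose_zero, Matrix.sub_mul, Matrix.one_mul, sub_eq_zero] at hQB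
  exact hQB.symm

theorem stmt1_general {n m p : ℕ} (hp : 0 < p)
    (A : Fin p → Matrix (Fin n) (Fin n) ℝ) (hA : ∀ k, (A k).PosSemidef)
    (B : Fin p → Matrix (Fin n) (Fin m) ℝ)
    (Γ : Matrix (Fin m) (Fin m) ℝ)
    (Adag : Matrix (Fin n) (Fin n) ℝ) (hdag : IsMoorePenrose (∑ k, A k) Adag)
    (hG : (Matrix.fromBlocks (∑ k, A k) (∑ k, B k) (∑ k, B k)ᵀ Γ).PosSemidef)
    (X : Matrix (Fin n) (Fin m) ℝ) (hX : X = Adag * ∑ k, B k)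
    (C : Fin p → Matrix (Fin m) (Fin m) ℝ)
    (hC : ∀ k, C k = (p : ℝ)⁻¹ • (Γ - Xᵀ * ∑ l, B l) + Xᵀ * A k * X) :
    (∑ k, C k = Γ) ∧
      ∀ k, (Matrix.fromBlocks (A k) (A k * X) (Xᵀ * (A k)ᵀ) (C k)).PosSemidef := by
  set S := ∑ k, A k
  set Bs := ∑ k, B k
  have hSX : S * X = Bs := by
    rw [hX, ← Matrix.mul_assoc, hdag.mul_mul_eq_of_fromBlocks_posSemidef hG]
  have hXBs : Xᵀ * Bs = Xᵀ * S * X := by rw [Matrix.mul_assoc, hSX]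
  have hSchur : (Γ - Xᵀ * S * X).PosSemidef := by
    rw [← conjTranspose_eq_transpose_of_trivial] at hG ⊢
    exact hG.sub_conjTranspose_mul_mul_of_fromBlocks hSX
  refine ⟨?_, fun k => ?_⟩
  · calc ∑ k, C k = (p : ℝ) • (p : ℝ)⁻¹ • (Γ - Xᵀ * Bs) + Xᵀ * S * X := by
          simp only [hC, Finset.sum_add_distrib, Finset.sum_const, Finset.card_univ,
            Fintype.card_fin, ← Nat.cast_smul_eq_nsmul ℝ, ← Matrix.mul_sum, ← Matrix.sum_mul, S]
      _ = Γ := by rw [smul_inv_smul₀ (Nat.cast_ne_zero.mpr hp.ne'), hXBs, sub_add_cancel]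
  · rw [hC k, hXBs, add_comm]
    simpa only [conjTranspose_eq_transpose_of_trivial] using
      (hA k).fromBlocks_mul_add X (hSchur.smul (inv_nonneg.mpr p.cast_nonneg))

/-- Construction of the arrow decomposition: if `G = [[∑Aₖ, ∑Bₖ], [(∑Bₖ)ᵀ, Γ]] ⪰ 0` with all
`Aₖ ⪰ 0` and `Γ ⪰ 0`, then with `X = A†B` and `Cₖ = (1/p)(Γ - XᵀB) + XᵀAₖX` we have
`∑ Cₖ = Γ` and each `[[Aₖ, AₖX], [XᵀAₖᵀ, Cₖ]] ⪰ 0`. -/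
theorem stmt1 {n m p : ℕ} (hp : 0 < p)
    (A : Fin p → Matrix (Fin n) (Fin n) ℝ) (hA : ∀ k, (A k).PosSemidef)
    (B : Fin p → Matrix (Fin n) (Fin m) ℝ)
    (Γ : Matrix (Fin m) (Fin m) ℝ) (hΓ : Γ.PosSemidef)
    (Adag : Matrix (Fin n) (Fin n) ℝ) (hdag : IsMoorePenrose (∑ k, A k) Adag)
    (hG : (Matrix.fromBlocks (∑ k, A k) (∑ k, B k) (∑ k, B k)ᵀ Γ).PosSemidef)
    (X : Matrix (Fin n) (Fin m) ℝ) (hX : X = Adag * ∑ k, B k)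
    (C : Fin p → Matrix (Fin m) (Fin m) ℝ)
    (hC : ∀ k, C k = (p : ℝ)⁻¹ • (Γ - Xᵀ * ∑ l, B l) + Xᵀ * A k * X) :
    (∑ k, C k = Γ) ∧
      ∀ k, (Matrix.fromBlocks (A k) (A k * X) (Xᵀ * (A k)ᵀ) (C k)).PosSemidef :=
  stmt1_general hp A hA B Γ Adag hdag hG X hX C hC
end

section
/- For real matrices A and B, the Moore–Penrose pseudoinverse of the Kronecker product satisfies (A ⊗ B)† = A† ⊗ B†. -/
/-! By the mixed-product rule `(A ⊗ B) * (C ⊗ D) = (A * C) ⊗ (B * D)` and `(A ⊗ B)ᵀ = Aᵀ ⊗ Bᵀ`,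
each Penrose condition for `A ⊗ B` and `A† ⊗ B†` is the Kronecker product of the same condition
for `A, A†` and for `B, B†`. -/

open Matrix Kronecker

theorem IsMoorePenrose.kronecker {m n p q : Type*} [Fintype m] [Fintype n] [Fintype p]
    [Fintype q] {A : Matrix m n ℝ} {Ad : Matrix n m ℝ} {B : Matrix p q ℝ} {Bd : Matrix q p ℝ}
    (hA : IsMoorePenrose A Ad) (hB : IsMoorePenrose B Bd) :
    IsMoorePenrose (A ⊗ₖ B) (Ad ⊗ₖ Bd) := by
  obtain ⟨hA₁, hA₂, hA₃, hA₄⟩ := hA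
  obtain ⟨hB₁, hB₂, hB₃, hB₄⟩ := hB
  refine ⟨?_, ?_, ?_, ?_⟩ <;>
    simp only [← mul_kronecker_mul, ← kroneckerMap_transpose, hA₁, hA₂, hA₃, hA₄, hB₁, hB₂,
      hB₃, hB₄]

/-- `(A ⊗ B)† = A† ⊗ B†`: if `Adag` and `Bdag` are the Moore–Penrose pseudoinverses of
`A` and `B`, then `Adag ⊗ Bdag` is the Moore–Penrose pseudoinverse of `A ⊗ B`. -/
theorem stmt7 {n m p q : ℕ}
    (A : Matrix (Fin n) (Fin m) ℝ) (B : Matrix (Fin p) (Fin q) ℝ)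
    (Adag : Matrix (Fin m) (Fin n) ℝ) (Bdag : Matrix (Fin q) (Fin p) ℝ)
    (hA : IsMoorePenrose A Adag) (hB : IsMoorePenrose B Bdag) :
    IsMoorePenrose (A ⊗ₖ B) (Adag ⊗ₖ Bdag) :=
  hA.kronecker hB
end

section
/- Let A(x) be an n×n symmetric polynomial matrix, P an n×s real matrix of full column rank with PᵀP = I_s, such that for all x ∈ ℝ^{n_x} the column span of A(x) is contained in the column span of P. Let b(x) be a length-L vector of polynomials and L_y a linear functional applied entrywise. Then the column span of L_y(A(x) ⊗ b(x)ᵀ b(x)) is contained in the column span of P ⊗ I_L. -/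
/-!
Since `PᵀP = I`, the matrix `PPᵀ` fixes every vector of `span P`, so the hypothesis gives
`A(x) = PPᵀA(x)` at every point `x`, hence `A = P (PᵀA)` as polynomial matrices. Applying a
linear functional entrywise commutes with left multiplication by a constant matrix, and
`(PQ) ⊗ bᵀb = (P ⊗ I)(Q ⊗ bᵀb)`, so `L_y(A ⊗ bᵀb) = (P ⊗ I) L_y(PᵀA ⊗ bᵀb)`.
-/

open Matrix Kronecker MvPolynomial

namespace Matrix

variable {K R : Type*} {l m n o : Type*}

theorem mul_transpose_mul_eq_self_of_mulVec_mem_range [Fintype m] [Fintype n] [DecidableEq n]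
    [Fintype o] [CommSemiring K] {P : Matrix m n K} {B : Matrix m o K} (hP : Pᵀ * P = 1)
    (hB : ∀ v, B *ᵥ v ∈ Set.range P.mulVec) :
    P * Pᵀ * B = B := by
  refine ext_iff_mulVec.mpr fun v => ?_
  obtain ⟨u, hu⟩ := hB v
  rw [← mulVec_mulVec, ← mulVec_mulVec, ← hu, mulVec_mulVec _ Pᵀ, hP, one_mulVec]

theorem map_algebraMap_mul_map [Fintype m] [CommSemiring K] [Semiring R] [Algebra K R]
    (X : Matrix l m K) (Y : Matrix m o R) (f : R →ₗ[K] K) :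
    (X.map (algebraMap K R) * Y).map f = X * Y.map f := by
  ext i j
  simp [mul_apply, map_sum, ← Algebra.smul_def]

/-- The paper's `L_y(A ⊗ bᵀb)`, with `b` a row vector, so that `bᵀb = vecMulVec b b`. -/
def localizingMatrix [CommSemiring K] [Mul R] [AddCommMonoid R] [Module K R] (f : R →ₗ[K] K)
    (A : Matrix m n R) (b : l → R) : Matrix (m × l) (n × l) K :=
  (A ⊗ₖ vecMulVec b b).map f

theorem localizingMatrix_map_algebraMap_mul [Fintype o] [DecidableEq l] [Fintype l]
    [CommSemiring K] [CommSemiring R] [Algebra K R]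
    (f : R →ₗ[K] K) (X : Matrix m o K) (Q : Matrix o n R) (b : l → R) :
    localizingMatrix f (X.map (algebraMap K R) * Q) b =
      (X ⊗ₖ (1 : Matrix l l K)) * localizingMatrix f Q b := by
  have hX :
      X.map (algebraMap K R) ⊗ₖ (1 : Matrix l l R) = (X ⊗ₖ 1).map (algebraMap K R) := by
    rw [← Matrix.map_one (algebraMap K R) (map_zero _) (map_one _), kroneckerMap_map_left,
      kroneckerMap_map_right, kroneckerMap_map]
    simp only [map_mul]
  rw [localizingMatrix, ← Matrix.one_mul (vecMulVec b b), mul_kronecker_mul, hX,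
    map_algebraMap_mul_map, localizingMatrix]

end Matrix

theorem MvPolynomial.map_algebraMap_mul_transpose_mul_eq_self_of_eval_mulVec_mem_range
    {σ K : Type*} [CommRing K] [IsDomain K] [Infinite K] {m n o : Type*} [Fintype m] [Fintype n]
    [DecidableEq n] [Fintype o] {A : Matrix m o (MvPolynomial σ K)} {P : Matrix m n K}
    (hP : Pᵀ * P = 1) (hA : ∀ (x : σ → K) v, A.map (eval x) *ᵥ v ∈ Set.range P.mulVec) :
    P.map (algebraMap K (MvPolynomial σ K)) * (Pᵀ.map (algebraMap K (MvPolynomial σ K)) * A) =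
      A := by
  refine Matrix.ext fun i j => MvPolynomial.funext fun x => ?_
  rw [← Matrix.map_apply (f := eval x), ← Matrix.map_apply (f := eval x), Matrix.map_mul,
    Matrix.map_mul, Matrix.map_map, Matrix.map_map, ← Matrix.mul_assoc]
  simp only [Function.comp_def, algebraMap_eq, eval_C, Matrix.map_id',
    mul_transpose_mul_eq_self_of_mulVec_mem_range hP (hA x)]

/-- If `span(A(x)) ⊆ span(P)` for all `x`, with `PᵀP = I`, then the column span of the
localizing matrix `L_y(A(x) ⊗ b(x)ᵀ b(x))` is contained in the column span of `P ⊗ I_L`. -/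
theorem stmt15 {n s L nx : ℕ}
    (A : Matrix (Fin n) (Fin n) (MvPolynomial (Fin nx) ℝ))
    (P : Matrix (Fin n) (Fin s) ℝ) (hP : Pᵀ * P = 1)
    (hspan : ∀ (x : Fin nx → ℝ) (v : Fin n → ℝ),
      (A.map (fun q => eval x q)).mulVec v ∈ Set.range P.mulVec)
    (b : Fin L → MvPolynomial (Fin nx) ℝ)
    (Ly : MvPolynomial (Fin nx) ℝ →ₗ[ℝ] ℝ) :
    ∀ v, (Matrix.of fun (pq : Fin n × Fin L) (rs : Fin n × Fin L) =>
        Ly (A pq.1 rs.1 * (b pq.2 * b rs.2))).mulVec v ∈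
      Set.range (P ⊗ₖ (1 : Matrix (Fin L) (Fin L) ℝ)).mulVec := by
  intro v
  have hA := map_algebraMap_mul_transpose_mul_eq_self_of_eval_mulVec_mem_range hP hspan
  let Q := Pᵀ.map (algebraMap ℝ (MvPolynomial (Fin nx) ℝ)) * A
  refine ⟨localizingMatrix Ly Q b *ᵥ v, ?_⟩
  rw [mulVec_mulVec, ← localizingMatrix_map_algebraMap_mul, hA]
  rfl
end

section
/- Let G = [[A, B], [Bᵀ, Γ]] be a symmetric block matrix with A ⪰ 0, and suppose additionally that Γ - Bᵀ A† B ≻ 0 (positive definite) and A A† B = B. Let A = ∑_{k=1}^p Aₖ with each Aₖ ⪰ 0, let X = A† B, S = (1/p)(Γ - Bᵀ A† B), and Cₖ = S + Xᵀ Aₖ X. Then for each k, and for any matrix Pₖ with orthonormal columns whose span equals span(Aₖ), the matrix [[Pₖᵀ Aₖ Pₖ, Pₖᵀ Aₖ X], [Xᵀ Aₖᵀ Pₖ, Xᵀ Aₖ X + S]] is positive definite. -/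
open Matrix

/-!
The block matrix factors as `Mᴴ (A ⊕ S) M` with `M = [[P, X], [0, 1]]`, so its quadratic form at
`(u, v)` is `(Pu + Xv)ᴴ A (Pu + Xv) + vᴴ S v`. This vanishes only if `v = 0` (as `S ≻ 0`) and
`A (Pu) = 0`; but `Pu` lies in the range of the Hermitian matrix `A`, which meets its kernel only
in `0`, so `Pu = 0` and hence `u = 0` because `P` has orthonormal columns.
-/

open scoped ComplexOrder

namespace Matrix

variable {𝕜 : Type*} [RCLike 𝕜] {n m r : Type*} [Fintype n] [Fintype m] [Fintype r]

theorem IsHermitian.eq_zero_of_mem_range_of_mulVec_eq_zero {A : Matrix n n 𝕜}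
    (hA : A.IsHermitian) {y : n → 𝕜} (hy : y ∈ Set.range A.mulVec) (hAy : A *ᵥ y = 0) :
    y = 0 := by
  obtain ⟨z, rfl⟩ := hy
  rw [← dotProduct_star_self_eq_zero, star_mulVec, ← dotProduct_mulVec, hA.eq, hAy,
    dotProduct_zero]

theorem PosSemidef.fromBlocks_zero_zero {A : Matrix n n 𝕜} {D : Matrix m m 𝕜}
    (hA : A.PosSemidef) (hD : D.PosSemidef) : (fromBlocks A 0 0 D).PosSemidef := by
  refine .of_dotProduct_mulVec_nonneg ?_ fun x => ?_
  · simp [IsHermitian, fromBlocks_conjTranspose, hA.1.eq, hD.1.eq]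
  · rw [← Sum.elim_comp_inl_inr x]
    simp only [fromBlocks_mulVec, Sum.elim_comp_inl, Sum.elim_comp_inr, zero_mulVec, add_zero,
      zero_add, Function.star_sumElim, sumElim_dotProduct_sumElim]
    exact add_nonneg (hA.dotProduct_mulVec_nonneg _) (hD.dotProduct_mulVec_nonneg _)

theorem PosSemidef.posDef_conjTranspose_mul_mul {D : Matrix n n 𝕜} (hD : D.PosSemidef)
    {M : Matrix n m 𝕜} (hM : ∀ x, D *ᵥ (M *ᵥ x) = 0 → x = 0) : (Mᴴ * D * M).PosDef := by
  refine PosDef.of_dotProduct_mulVec_pos (isHermitian_conjTranspose_mul_mul M hD.1)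
    fun x hx => ?_
  have hq : star x ⬝ᵥ (Mᴴ * D * M) *ᵥ x = star (M *ᵥ x) ⬝ᵥ D *ᵥ (M *ᵥ x) := by
    simp only [star_mulVec, dotProduct_mulVec, vecMul_vecMul, ← mulVec_mulVec]
  rw [hq]
  exact (hD.dotProduct_mulVec_nonneg _).lt_of_ne'
    fun h => hx (hM x ((hD.dotProduct_mulVec_zero_iff _).1 h))

omit [Fintype r] in
theorem fromBlocks_conjTranspose_mul_fromBlocks_mul_fromBlocks [DecidableEq m]
    (A : Matrix n n 𝕜) (D : Matrix m m 𝕜) (P : Matrix n r 𝕜) (X : Matrix n m 𝕜) :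
    (fromBlocks P X 0 1 : Matrix (n ⊕ m) (r ⊕ m) 𝕜)ᴴ * fromBlocks A 0 0 D *
        (fromBlocks P X 0 1 : Matrix (n ⊕ m) (r ⊕ m) 𝕜) =
      fromBlocks (Pᴴ * A * P) (Pᴴ * A * X) (Xᴴ * A * P) (Xᴴ * A * X + D) := by
  simp [fromBlocks_conjTranspose, fromBlocks_multiply, Matrix.mul_assoc]

theorem posDef_fromBlocks_of_range_subset [DecidableEq m] {A : Matrix n n 𝕜}
    (hA : A.PosSemidef) {S : Matrix m m 𝕜} (hS : S.PosDef) {P : Matrix n r 𝕜}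
    (hP : Function.Injective P.mulVec) (hPA : Set.range P.mulVec ⊆ Set.range A.mulVec)
    (X : Matrix n m 𝕜) :
    (fromBlocks (Pᴴ * A * P) (Pᴴ * A * X) (Xᴴ * A * P) (Xᴴ * A * X + S)).PosDef := by
  rw [← fromBlocks_conjTranspose_mul_fromBlocks_mul_fromBlocks]
  refine (hA.fromBlocks_zero_zero hS.posSemidef).posDef_conjTranspose_mul_mul fun x hx => ?_
  simp only [fromBlocks_mulVec, Sum.elim_comp_inl, Sum.elim_comp_inr, zero_mulVec, add_zero,
    zero_add, one_mulVec] at hx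
  obtain ⟨hAy, hSv⟩ := Sum.elim_eq_iff.1 (hx.trans Sum.elim_zero_zero.symm)
  have hv : x ∘ Sum.inr = 0 := by
    by_contra hv
    exact (hS.dotProduct_mulVec_pos hv).ne' (by rw [hSv, dotProduct_zero])
  rw [hv, mulVec_zero, add_zero] at hAy
  have hPu : P *ᵥ (x ∘ Sum.inl) = 0 :=
    hA.1.eq_zero_of_mem_range_of_mulVec_eq_zero (hPA ⟨_, rfl⟩) hAy
  have hu : x ∘ Sum.inl = 0 := hP (by rw [hPu, mulVec_zero])
  rw [← Sum.elim_comp_inl_inr x, hu, hv, Sum.elim_zero_zero]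

end Matrix

theorem stmt19_general {n m p : ℕ} (hp : 0 < p)
    (A : Fin p → Matrix (Fin n) (Fin n) ℝ) (hA : ∀ k, (A k).PosSemidef)
    (B : Matrix (Fin n) (Fin m) ℝ)
    (Γ : Matrix (Fin m) (Fin m) ℝ)
    (Adag : Matrix (Fin n) (Fin n) ℝ)
    (hSchur : (Γ - Bᵀ * Adag * B).PosDef)
    (X : Matrix (Fin n) (Fin m) ℝ)
    (S : Matrix (Fin m) (Fin m) ℝ) (hS : S = (p : ℝ)⁻¹ • (Γ - Bᵀ * Adag * B))
    (s : Fin p → ℕ) (P : ∀ k, Matrix (Fin n) (Fin (s k)) ℝ)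
    (hPo : ∀ k, (P k)ᵀ * P k = 1)
    (hPspan : ∀ k, Set.range (A k).mulVec = Set.range (P k).mulVec) :
    ∀ k, (Matrix.fromBlocks ((P k)ᵀ * A k * P k) ((P k)ᵀ * (A k * X))
        (Xᵀ * (A k)ᵀ * P k) (Xᵀ * A k * X + S)).PosDef := by
  intro k
  have hSpd : S.PosDef := hS ▸ hSchur.smul (inv_pos.2 (Nat.cast_pos.2 hp))
  have hP : Function.Injective (P k).mulVec := fun u w huw => by
    simpa [mulVec_mulVec, hPo k] using congrArg (P k)ᵀ.mulVec huw
  have hAt : (A k)ᵀ = A k := (hA k).1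
  simpa [conjTranspose_eq_transpose_of_trivial, hAt, Matrix.mul_assoc] using
    posDef_fromBlocks_of_range_subset (hA k) hSpd hP (hPspan k).superset X

/-- Strict feasibility of the projected arrow decomposition: with `A = ∑ Aₖ`, each `Aₖ ⪰ 0`,
`Γ - BᵀA†B ≻ 0`, `A A† B = B`, `X = A†B`, `S = (1/p)(Γ - BᵀA†B)`, and `Pₖ` having orthonormal
columns with `span(Pₖ) = span(Aₖ)`, each projected block matrix
`[[PₖᵀAₖPₖ, PₖᵀAₖX], [XᵀAₖᵀPₖ, XᵀAₖX + S]]` is positive definite. -/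
theorem stmt19 {n m p : ℕ} (hp : 0 < p)
    (A : Fin p → Matrix (Fin n) (Fin n) ℝ) (hA : ∀ k, (A k).PosSemidef)
    (B : Matrix (Fin n) (Fin m) ℝ)
    (Γ : Matrix (Fin m) (Fin m) ℝ) (hΓ : Γᵀ = Γ)
    (Adag : Matrix (Fin n) (Fin n) ℝ) (hdag : IsMoorePenrose (∑ k, A k) Adag)
    (hAB : (∑ k, A k) * Adag * B = B)
    (hSchur : (Γ - Bᵀ * Adag * B).PosDef)
    (X : Matrix (Fin n) (Fin m) ℝ) (hX : X = Adag * B)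
    (S : Matrix (Fin m) (Fin m) ℝ) (hS : S = (p : ℝ)⁻¹ • (Γ - Bᵀ * Adag * B))
    (s : Fin p → ℕ) (P : ∀ k, Matrix (Fin n) (Fin (s k)) ℝ)
    (hPo : ∀ k, (P k)ᵀ * P k = 1)
    (hPspan : ∀ k, Set.range (A k).mulVec = Set.range (P k).mulVec) :
    ∀ k, (Matrix.fromBlocks ((P k)ᵀ * A k * P k) ((P k)ᵀ * (A k * X))
        (Xᵀ * (A k)ᵀ * P k) (Xᵀ * A k * X + S)).PosDef :=
  stmt19_general hp A hA B Γ Adag hSchur X S hS s P hPo hPspan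
end
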